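/- arXiv:2311.01416 — 7 statements merged into one kernel-verified Lean document; each statement's English description precedes it below -/
import Mathlib

section
/- Let S be a finite non-empty set of integers. Then the set of integers a such that |(S + a) \ S| < |S|/2 has size less than 2|S|. -/
/-!
An overlap `#((S + a) ∩ S)` counts the representations of `a` as a difference `t - s` with
`s, t ∈ S`, so the overlaps sum to `#S ^ 2` over all `a`. An almost period has overlap greater
than `#S / 2`, hence by Markov's inequality there are fewer than `2 * #S` of them.
-/

open Finset
open scoped Pointwise

namespace Finset

variable {G : Type*} [AddGroup G] [DecidableEq G]

lemma card_image_add_right_inter_eq_addConvolution (S : Finset G) (a : G) :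
    #(S.image (· + a) ∩ S) = (-S).addConvolution S a :=
  card_nbij' (fun z ↦ (a + -z, z)) Prod.snd
    (by simp +contextual [Set.MapsTo])
    (by
      simp only [Set.MapsTo, coe_filter, mem_product, mem_neg', coe_inter, coe_image]
      rintro ⟨b, z⟩ ⟨⟨hb, hz⟩, rfl⟩
      exact ⟨⟨-b, hb, by simp⟩, hz⟩)
    (fun _ _ ↦ rfl)
    (by
      rintro ⟨b, z⟩ h
      simp [← (mem_filter.1 h).2, add_assoc])

lemma card_image_add_right_sdiff_add_addConvolution (S : Finset G) (a : G) :
    #(S.image (· + a) \ S) + (-S).addConvolution S a = #S := by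
  rw [← card_image_add_right_inter_eq_addConvolution, card_sdiff_add_card_inter,
    card_image_of_injective _ (add_left_injective a)]

lemma sum_addConvolution (A B : Finset G) :
    ∑ x ∈ A + B, A.addConvolution B x = #A * #B := by
  rw [← card_product]
  exact (card_eq_sum_card_fiberwise fun p hp ↦
    add_mem_add (mem_product.1 hp).1 (mem_product.1 hp).2).symm

lemma setOf_lt_addConvolution {R : Type*} [Semiring R] [LinearOrder R] [IsOrderedRing R]
    (A B : Finset G) {t : R} (ht : 0 ≤ t) :
    {x | t < A.addConvolution B x} = ↑{x ∈ A + B | t < A.addConvolution B x} := by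
  ext x
  simp only [Set.mem_ofPred_eq, coe_filter]
  refine iff_and_self.2 fun hx ↦ ?_
  by_contra hAB
  rw [(addConvolution_eq_zero).2 hAB, Nat.cast_zero] at hx
  exact hx.not_ge ht

lemma card_filter_lt_addConvolution_mul_lt {R : Type*} [Semiring R] [LinearOrder R]
    [IsStrictOrderedRing R] {A B : Finset G} (hA : A.Nonempty) (hB : B.Nonempty) (t : R) :
    #{x ∈ A + B | t < A.addConvolution B x} * t < #A * #B := by
  set P := {x ∈ A + B | t < A.addConvolution B x}
  rcases P.eq_empty_or_nonempty with hP | hP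
  · rw [hP, card_empty, Nat.cast_zero, zero_mul]
    exact_mod_cast Nat.mul_pos hA.card_pos hB.card_pos
  calc (#P : R) * t = ∑ _ ∈ P, t := by rw [sum_const, nsmul_eq_mul]
    _ < ∑ x ∈ P, (A.addConvolution B x : R) :=
        sum_lt_sum_of_nonempty hP fun _ hx ↦ (mem_filter.1 hx).2
    _ ≤ ∑ x ∈ A + B, (A.addConvolution B x : R) :=
        sum_le_sum_of_subset_of_nonneg (filter_subset _ _) fun _ _ _ ↦ Nat.cast_nonneg _
    _ = #A * #B := by exact_mod_cast sum_addConvolution A B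

end Finset

theorem stmt_1 (S : Finset ℤ) (hS : S.Nonempty) :
    {a : ℤ | (((S.image (· + a)) \ S).card : ℚ) < (S.card : ℚ) / 2}.Finite ∧
    {a : ℤ | (((S.image (· + a)) \ S).card : ℚ) < (S.card : ℚ) / 2}.ncard < 2 * S.card := by
  have hperiods : {a : ℤ | (((S.image (· + a)) \ S).card : ℚ) < (S.card : ℚ) / 2} =
      {a | (#S : ℚ) / 2 < (-S).addConvolution S a} := by
    ext a
    have h := congrArg (Nat.cast (R := ℚ)) (card_image_add_right_sdiff_add_addConvolution S a)
    push_cast at h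
    simp only [Set.mem_ofPred_eq]
    constructor <;> intro <;> linarith
  have hhalf : (0 : ℚ) ≤ #S / 2 := by positivity
  rw [hperiods, setOf_lt_addConvolution _ _ hhalf, Set.ncard_coe_finset]
  refine ⟨finite_toSet _, ?_⟩
  have hmarkov := card_filter_lt_addConvolution_mul_lt (R := ℚ) hS.neg hS (#S / 2)
  rw [card_neg] at hmarkov
  have hcard : (0 : ℚ) < #S := by exact_mod_cast hS.card_pos
  have hcount : (#{x ∈ -S + S | (#S : ℚ) / 2 < (-S).addConvolution S x} : ℚ) < 2 * #S := by
    nlinarith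
  exact_mod_cast hcount
end

section
/- Let S and A be finite non-empty sets of integers and let k be a positive integer such that |kA| ≥ 2|S|, where kA denotes the k-fold sumset {a_1 + ... + a_k : a_i ∈ A}. Then there exists a ∈ A such that |(S + a) \ S| ≥ |S|/(2k). -/
/-!
Write `e(x) = |(S + x) \ S|`. Since `(S + (x + y)) \ S ⊆ ((S + x) \ S) + y ∪ ((S + y) \ S)`,
`e` is subadditive, so if `e ≤ m` on `A` then `e ≤ k m` on `kA`, i.e. `|(S + x) ∩ S| ≥ |S| - k m`
for every `x ∈ kA`. The overlaps `(S + x) ∩ S` correspond to the pairs `(s, t) ∈ S × S` with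
`t - s = x`, so they sum to at most `|S|²` over `x ∈ kA`. As `|kA| ≥ 2|S|`, this forces
`|S| ≤ 2 k m`; take for `m` the maximum of `e` on `A`.
-/

/-- The `k`-fold sumset of a finite set of integers. -/
def nfoldSumset (k : ℕ) (A : Finset ℤ) : Finset ℤ :=
  (Fintype.piFinset fun _ : Fin k => A).image fun f => ∑ i, f i

open Finset

section Subadditivity

variable {G : Type*} [AddCancelCommMonoid G] [DecidableEq G]

lemma card_image_add_add_sdiff_le (S : Finset G) (x y : G) :
    #(S.image (· + (x + y)) \ S) ≤ #(S.image (· + x) \ S) + #(S.image (· + y) \ S) := by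
  have hsub : S.image (· + (x + y)) \ S ⊆
      (S.image (· + x) \ S).image (· + y) ∪ (S.image (· + y) \ S) := by
    intro t ht
    simp only [mem_sdiff, mem_union, mem_image] at ht ⊢
    obtain ⟨⟨s, hs, rfl⟩, htS⟩ := ht
    by_cases hy : ∃ u ∈ S, u + y = s + (x + y)
    · exact Or.inr ⟨hy, htS⟩
    · refine Or.inl ⟨s + x, ⟨⟨s, hs, rfl⟩, fun hsx => hy ⟨s + x, hsx, add_assoc s x y⟩⟩, ?_⟩
      exact add_assoc s x y
  calc #(S.image (· + (x + y)) \ S)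
      ≤ #((S.image (· + x) \ S).image (· + y)) + #(S.image (· + y) \ S) :=
        (card_le_card hsub).trans (card_union_le _ _)
    _ = #(S.image (· + x) \ S) + #(S.image (· + y) \ S) := by
        rw [card_image_of_injective _ (add_left_injective y)]

lemma card_image_add_sum_sdiff_le {ι : Type*} (S : Finset G) (t : Finset ι) (f : ι → G) :
    #(S.image (· + ∑ i ∈ t, f i) \ S) ≤ ∑ i ∈ t, #(S.image (· + f i) \ S) := by
  induction t using Finset.cons_induction with
  | empty => simp
  | cons a t _ ih =>
    rw [sum_cons, sum_cons]
    exact (card_image_add_add_sdiff_le S (f a) _).trans (Nat.add_le_add_left ih _)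

end Subadditivity

section Overlaps

variable {G : Type*} [AddCommGroup G] [DecidableEq G]

lemma card_image_add_inter_eq_card_filter_sub (S : Finset G) (x : G) :
    #(S.image (· + x) ∩ S) = #{p ∈ S ×ˢ S | p.2 - p.1 = x} := by
  refine card_nbij' (fun t => (t - x, t)) Prod.snd ?_ ?_ ?_ ?_
  · intro t ht
    simp only [mem_coe, mem_inter, mem_image] at ht
    obtain ⟨⟨s, hs, rfl⟩, ht⟩ := ht
    simp [hs, ht]
  · rintro ⟨s, t⟩ hp
    simp only [mem_coe, mem_filter, mem_product] at hp
    obtain ⟨⟨hs, ht⟩, rfl⟩ := hp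
    simp [hs, ht]
  · intro t _
    simp
  · rintro ⟨s, t⟩ hp
    simp only [mem_coe, mem_filter, mem_product] at hp
    simp [← hp.2]

lemma sum_card_image_add_inter_le (S X : Finset G) :
    ∑ x ∈ X, #(S.image (· + x) ∩ S) ≤ #S * #S := by
  simp_rw [card_image_add_inter_eq_card_filter_sub, sum_card_fiberwise_eq_card_filter]
  exact (card_filter_le _ _).trans (card_product S S).le

lemma card_le_two_mul_of_card_image_add_sdiff_le {S X : Finset G} {m : ℕ} (hX : 2 * #S ≤ #X)
    (hm : ∀ x ∈ X, #(S.image (· + x) \ S) ≤ m) : #S ≤ 2 * m := by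
  have hoverlap : ∀ x ∈ X, #S - m ≤ #(S.image (· + x) ∩ S) := by
    intro x hx
    have hsplit := card_inter_add_card_sdiff (S.image (· + x)) S
    rw [card_image_of_injective _ (add_left_injective x)] at hsplit
    have hexcess := hm x hx
    omega
  have htotal : #X * (#S - m) ≤ #S * #S := by
    simpa using (sum_le_sum hoverlap).trans (sum_card_image_add_inter_le S X)
  rcases (#S).eq_zero_or_pos with h0 | hpos
  · omega
  have hmul : #S * (2 * (#S - m)) ≤ #S * #S := by
    calc #S * (2 * (#S - m)) = 2 * #S * (#S - m) := by ring
      _ ≤ #X * (#S - m) := Nat.mul_le_mul_right _ hX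
      _ ≤ #S * #S := htotal
  have := Nat.le_of_mul_le_mul_left hmul hpos
  omega

end Overlaps

lemma card_image_add_sdiff_le_of_mem_nfoldSumset {S A : Finset ℤ} {k m : ℕ} {x : ℤ}
    (hx : x ∈ nfoldSumset k A) (hm : ∀ a ∈ A, #(S.image (· + a) \ S) ≤ m) :
    #(S.image (· + x) \ S) ≤ k * m := by
  obtain ⟨f, hf, rfl⟩ := mem_image.mp hx
  rw [Fintype.mem_piFinset] at hf
  calc #(S.image (· + ∑ i, f i) \ S) ≤ ∑ i, #(S.image (· + f i) \ S) :=
        card_image_add_sum_sdiff_le S univ f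
    _ ≤ ∑ _i : Fin k, m := sum_le_sum fun i _ => hm _ (hf i)
    _ = k * m := by simp

theorem stmt_2_general (S A : Finset ℤ) (hA : A.Nonempty) (k : ℕ)
    (h : 2 * S.card ≤ (nfoldSumset k A).card) :
    ∃ a ∈ A, (S.card : ℝ) / (2 * k) ≤ (((S.image (· + a)) \ S).card : ℝ) := by
  obtain ⟨a, ha, hmax⟩ := A.exists_max_image (fun a => #(S.image (· + a) \ S)) hA
  have hcard : #S ≤ 2 * (k * #(S.image (· + a) \ S)) :=
    card_le_two_mul_of_card_image_add_sdiff_le h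
      fun x hx => card_image_add_sdiff_le_of_mem_nfoldSumset hx hmax
  refine ⟨a, ha, div_le_of_le_mul₀ (by positivity) (by positivity) ?_⟩
  exact_mod_cast hcard.trans_eq (by ring)

theorem stmt_2 (S A : Finset ℤ) (hS : S.Nonempty) (hA : A.Nonempty) (k : ℕ) (hk : 0 < k)
    (h : 2 * S.card ≤ (nfoldSumset k A).card) :
    ∃ a ∈ A, (S.card : ℝ) / (2 * k) ≤ (((S.image (· + a)) \ S).card : ℝ) :=
  stmt_2_general S A hA k h
end

section
/- Let Q be a d-dimensional generalized arithmetic progression with widths (w_1, ..., w_d) which is not proper. Then |2Q| + w_1·w_2···w_d ≤ ∏_{i=1}^{d}(2w_i − 1). In particular, |2Q| < (2^d − 1)·Vol(Q), where Vol(Q) = ∏ w_i. -/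
/-!
If two terms of `Q` coincide, the difference `k ≠ 0` of their index vectors satisfies
`∑ kᵢ qᵢ = 0` and `|kᵢ| < wᵢ`. The sums in `2Q` are indexed by the box `B = ∏ [0, 2wᵢ - 2]` of
size `∏ (2wᵢ - 1)`, and the evaluation map on `B` is `k`-periodic. Moving any index along `k`
until its next translate would leave `B` shows that `2Q` is already the image of the `N ∈ B`
with `N + k ∉ B`. The remaining indices, those with `N + k ∈ B`, contain a translate of the box
`∏ [0, wᵢ - 1]`, so there are at least `∏ wᵢ` of them. Finally `∏ (2wᵢ - 1) < 2ᵈ ∏ wᵢ`.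
-/

open Pointwise

/-- The generalized arithmetic progression with base `x`, differences `q` and widths `w`. -/
def GAP (d : ℕ) (x : ℤ) (q : Fin d → ℤ) (w : Fin d → ℕ) : Finset ℤ :=
  Finset.image (fun n : ∀ i, Fin (w i) => x + ∑ i, ((n i : ℕ) : ℤ) * q i) Finset.univ

open Finset

section Translation

variable {G : Type*} [AddLeftCancelMonoid G] [IsAddTorsionFree G] {k : G}

theorem Finset.exists_add_nsmul_mem_add_succ_nsmul_notMem (hk : k ≠ 0) (B : Finset G)
    {a : G} (ha : a ∈ B) : ∃ n : ℕ, a + n • k ∈ B ∧ a + (n + 1) • k ∉ B := by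
  by_contra! h
  have hall : ∀ n : ℕ, a + n • k ∈ B := fun n => by
    induction n with
    | zero => simpa using ha
    | succ n ih => exact h n ih
  have hinj : Function.Injective fun n : ℕ => a + n • k :=
    fun m n hmn => injective_nsmul_iff_not_isOfFinAddOrder.2
      (not_isOfFinAddOrder_of_isAddTorsionFree hk) (add_left_cancel hmn)
  exact Set.infinite_range_of_injective hinj
    (B.finite_toSet.subset (Set.range_subset_iff.2 hall))

variable [DecidableEq G] {β : Type*} [DecidableEq β] {f : G → β}

theorem Finset.image_subset_image_filter_add_notMem (hk : k ≠ 0) (hf : Function.Periodic f k)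
    (B : Finset G) : B.image f ⊆ {a ∈ B | a + k ∉ B}.image f := by
  intro y hy
  obtain ⟨a, ha, rfl⟩ := mem_image.1 hy
  obtain ⟨n, hn, hn'⟩ := B.exists_add_nsmul_mem_add_succ_nsmul_notMem hk ha
  refine mem_image.2 ⟨a + n • k, mem_filter.2 ⟨hn, ?_⟩, hf.nsmul n a⟩
  rwa [add_assoc, ← succ_nsmul]

theorem Finset.card_image_add_card_filter_add_mem_le (hk : k ≠ 0) (hf : Function.Periodic f k)
    (B : Finset G) : #(B.image f) + #{a ∈ B | a + k ∈ B} ≤ #B := by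
  rw [← B.card_filter_add_card_filter_not (fun a => a + k ∈ B), add_comm]
  gcongr
  exact (card_le_card (B.image_subset_image_filter_add_notMem hk hf)).trans card_image_le

end Translation

theorem Finset.prod_two_mul_sub_one_lt {ι : Type*} [Fintype ι] [Nonempty ι] {w : ι → ℕ}
    (hw : ∀ i, 0 < w i) : ∏ i, (2 * w i - 1) < 2 ^ Fintype.card ι * ∏ i, w i := by
  rw [← card_univ, ← prod_const, ← prod_mul_distrib]
  refine prod_lt_prod (fun i _ => by have := hw i; omega) (fun i _ => by omega)
    ⟨Classical.arbitrary ι, mem_univ _, by have := hw (Classical.arbitrary ι); omega⟩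

namespace GAP

variable {d : ℕ}

noncomputable def doubledIndexBox (w : Fin d → ℕ) : Finset (Fin d → ℤ) :=
  Fintype.piFinset fun i => Icc 0 (2 * (w i : ℤ) - 2)

theorem mem_doubledIndexBox {w : Fin d → ℕ} {N : Fin d → ℤ} :
    N ∈ doubledIndexBox w ↔ ∀ i, 0 ≤ N i ∧ N i ≤ 2 * (w i : ℤ) - 2 := by
  simp only [doubledIndexBox, Fintype.mem_piFinset, mem_Icc]

theorem card_doubledIndexBox (w : Fin d → ℕ) : #(doubledIndexBox w) = ∏ i, (2 * w i - 1) := by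
  rw [doubledIndexBox, Fintype.card_piFinset]
  refine prod_congr rfl fun i _ => ?_
  rw [Int.card_Icc]
  omega

theorem add_subset_image_doubledIndexBox (x : ℤ) (q : Fin d → ℤ) (w : Fin d → ℕ) :
    GAP d x q w + GAP d x q w ⊆
      (doubledIndexBox w).image fun N => 2 * x + ∑ i, N i * q i := by
  intro y hy
  obtain ⟨_, hu, _, hv, rfl⟩ := mem_add.1 hy
  obtain ⟨a, -, rfl⟩ := mem_image.1 hu
  obtain ⟨b, -, rfl⟩ := mem_image.1 hv
  refine mem_image.2 ⟨fun i => ((a i : ℕ) : ℤ) + ((b i : ℕ) : ℤ), ?_, ?_⟩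
  · refine mem_doubledIndexBox.2 fun i => ?_
    have := (a i).isLt
    have := (b i).isLt
    omega
  · simp only [add_mul, sum_add_distrib]
    ring

theorem exists_relation_of_card_ne {x : ℤ} {q : Fin d → ℤ} {w : Fin d → ℕ}
    (hnp : #(GAP d x q w) ≠ ∏ i, w i) :
    ∃ k : Fin d → ℤ, k ≠ 0 ∧ ∑ i, k i * q i = 0 ∧ ∀ i, |k i| < w i := by
  have hninj : ¬ Function.Injective fun n : ∀ i, Fin (w i) => x + ∑ i, ((n i : ℕ) : ℤ) * q i := by
    intro h
    apply hnp
    rw [GAP, card_image_of_injective _ h, card_univ, Fintype.card_pi]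
    simp
  obtain ⟨a, b, hab, hne⟩ := Function.not_injective_iff.1 hninj
  refine ⟨fun i => ((a i : ℕ) : ℤ) - ((b i : ℕ) : ℤ), fun h => hne ?_, ?_, fun i => ?_⟩
  · funext i
    exact Fin.ext (by simpa [sub_eq_zero] using congrFun h i)
  · simp only [sub_mul, sum_sub_distrib]
    linarith
  · have := (a i).isLt
    have := (b i).isLt
    rw [abs_lt]
    dsimp only
    omega

theorem prod_le_card_filter_add_mem_doubledIndexBox {w : Fin d → ℕ} {k : Fin d → ℤ}
    (hk : ∀ i, |k i| < w i) :
    ∏ i, w i ≤ #{N ∈ doubledIndexBox w | N + k ∈ doubledIndexBox w} := by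
  calc ∏ i, w i = #(Fintype.piFinset fun i => Icc (max 0 (-k i)) (max 0 (-k i) + w i - 1)) := by
        rw [Fintype.card_piFinset]
        refine prod_congr rfl fun i _ => ?_
        rw [Int.card_Icc]
        omega
    _ ≤ _ := by
        refine card_le_card fun N hN => ?_
        simp only [Fintype.mem_piFinset, mem_Icc] at hN
        simp only [mem_filter, mem_doubledIndexBox, Pi.add_apply]
        refine ⟨fun i => ?_, fun i => ?_⟩ <;>
        · have := hN i
          have := abs_lt.1 (hk i)
          omega

theorem card_add_self_add_prod_le (x : ℤ) {q : Fin d → ℤ} {w : Fin d → ℕ} {k : Fin d → ℤ}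
    (hk0 : k ≠ 0) (hkq : ∑ i, k i * q i = 0) (hkw : ∀ i, |k i| < w i) :
    #(GAP d x q w + GAP d x q w) + ∏ i, w i ≤ ∏ i, (2 * w i - 1) := by
  have hperiodic : Function.Periodic (fun N : Fin d → ℤ => 2 * x + ∑ i, N i * q i) k := by
    intro N
    simp only [Pi.add_apply, add_mul, sum_add_distrib, hkq, add_zero]
  rw [← card_doubledIndexBox]
  calc _ ≤ #((doubledIndexBox w).image fun N => 2 * x + ∑ i, N i * q i) +
          #{N ∈ doubledIndexBox w | N + k ∈ doubledIndexBox w} :=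
        add_le_add (card_le_card (add_subset_image_doubledIndexBox x q w))
          (prod_le_card_filter_add_mem_doubledIndexBox hkw)
    _ ≤ _ := card_image_add_card_filter_add_mem_le hk0 hperiodic _

end GAP

theorem stmt_4_general (d : ℕ) (x : ℤ) (q : Fin d → ℤ) (w : Fin d → ℕ)
    (hnp : (GAP d x q w).card ≠ ∏ i, w i) :
    (GAP d x q w + GAP d x q w).card + ∏ i, w i ≤ ∏ i, (2 * w i - 1) ∧
    (GAP d x q w + GAP d x q w).card < (2 ^ d - 1) * ∏ i, w i := by
  obtain ⟨k, hk0, hkq, hkw⟩ := GAP.exists_relation_of_card_ne hnp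
  have hfirst := GAP.card_add_self_add_prod_le x hk0 hkq hkw
  obtain ⟨j, -⟩ := Function.ne_iff.1 hk0
  have : Nonempty (Fin d) := ⟨j⟩
  have hlt := prod_two_mul_sub_one_lt fun i =>
    Int.natCast_pos.1 ((abs_nonneg (k i)).trans_lt (hkw i))
  rw [Fintype.card_fin] at hlt
  refine ⟨hfirst, ?_⟩
  rw [Nat.sub_mul, one_mul]
  omega

theorem stmt_4 (d : ℕ) (x : ℤ) (q : Fin d → ℤ) (w : Fin d → ℕ) (hw : ∀ i, 0 < w i)
    (hnp : (GAP d x q w).card ≠ ∏ i, w i) :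
    (GAP d x q w + GAP d x q w).card + ∏ i, w i ≤ ∏ i, (2 * w i - 1) ∧
    (GAP d x q w + GAP d x q w).card < (2 ^ d - 1) * ∏ i, w i :=
  stmt_4_general d x q w hnp
end

section
/- Let c be a real with 0 < c ≤ 1, and let A = {Σ_{i=1}^{d} n_i q_i : n_i ∈ [a_i, b_i]} be a homogeneous GAP each of whose widths b_i − a_i + 1 is at least 1 + 4/c. Then the integer multifold sumset 2⌈1/c⌉ · (cA) contains a translate of A, where cA = {Σ n_i q_i : c·a_i ≤ n_i ≤ c·b_i}. -/
/-- The homogeneous GAP `{∑ n_i q_i : a_i ≤ n_i ≤ b_i}` with integer coefficients in real intervals. -/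
def hGAP (d : ℕ) (q : Fin d → ℤ) (a b : Fin d → ℝ) : Set ℤ :=
  {y | ∃ n : Fin d → ℤ, (∀ i, a i ≤ (n i : ℝ) ∧ (n i : ℝ) ≤ b i) ∧ y = ∑ i, n i * q i}

/-- The `k`-fold sumset of a set of integers. -/
def nfoldSet (k : ℕ) (A : Set ℤ) : Set ℤ :=
  {x | ∃ f : Fin k → ℤ, (∀ i, f i ∈ A) ∧ x = ∑ i, f i}

/-!
Round the box of `cA` inwards to the integer box `[L, U]` with `L = ⌈c a⌉`, `U = ⌊c b⌋`. Every
integer in `[s L, s U]` is a sum of `s` integers from `[L, U]`, so coordinatewise the GAP with box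
`[s L, s U]` lies in `s (cA)`. For `s = 2⌈1/c⌉` the width condition `c (b - a) ≥ 4` makes
`s (U - L) ≥ s (c (b - a) - 2) ≥ s c (b - a) / 2 ≥ b - a`, so `A` shifted to start at `s L`
fits in that box.
-/

open Finset

theorem nfoldSet_mono (k : ℕ) {A B : Set ℤ} (h : A ⊆ B) : nfoldSet k A ⊆ nfoldSet k B := by
  rintro _ ⟨f, hf, rfl⟩
  exact ⟨f, fun i => h (hf i), rfl⟩

theorem Icc_subset_nfoldSet_Icc (s : ℕ) (L U : ℤ) :
    Set.Icc (s * L) (s * U) ⊆ nfoldSet s (Set.Icc L U) := by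
  induction s with
  | zero =>
    intro m hm
    refine ⟨Fin.elim0, fun i => i.elim0, ?_⟩
    simp only [CharP.cast_eq_zero, zero_mul, Set.Icc_self, Set.mem_singleton_iff] at hm
    simp [hm]
  | succ s ih =>
    rintro m ⟨hLm, hmU⟩
    push_cast at hLm hmU
    have hLU : L ≤ U := le_of_mul_le_mul_left (by linarith) (by positivity : (0 : ℤ) < s + 1)
    have hsLU : s * L ≤ s * U := mul_le_mul_of_nonneg_left hLU (by positivity)
    -- Take the largest admissible first summand; the rest is then within reach of `s` summands.
    set x := min U (m - s * L)
    have hrest : m - x ∈ Set.Icc (s * L : ℤ) (s * U) := by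
      constructor
      · linarith [min_le_right U (m - s * L)]
      · rcases min_cases U (m - s * L) with ⟨h, _⟩ | ⟨h, _⟩ <;> simp only [x, h] <;> linarith
    obtain ⟨g, hg, hgsum⟩ := ih hrest
    refine ⟨Fin.cons x g, Fin.cases ⟨le_min hLU (by linarith), min_le_left _ _⟩ hg, ?_⟩
    rw [Fin.sum_cons, ← hgsum]
    ring

section hGAP

variable {d : ℕ} (q : Fin d → ℤ)

theorem hGAP_mono {a b a' b' : Fin d → ℝ} (ha : ∀ i, a' i ≤ a i) (hb : ∀ i, b i ≤ b' i) :
    hGAP d q a b ⊆ hGAP d q a' b' := by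
  rintro _ ⟨n, hn, rfl⟩
  exact ⟨n, fun i => ⟨(ha i).trans (hn i).1, (hn i).2.trans (hb i)⟩, rfl⟩

theorem hGAP_subset_ceil_floor (a b : Fin d → ℝ) :
    hGAP d q a b ⊆ hGAP d q (fun i => ⌈a i⌉) (fun i => ⌊b i⌋) := by
  rintro _ ⟨n, hn, rfl⟩
  refine ⟨n, fun i => ⟨?_, ?_⟩, rfl⟩ <;> dsimp only
  · exact_mod_cast Int.ceil_le.mpr (hn i).1
  · exact_mod_cast Int.le_floor.mpr (hn i).2

theorem image_add_hGAP_subset (a b : Fin d → ℝ) (t : Fin d → ℤ) :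
    (· + ∑ i, t i * q i) '' hGAP d q a b ⊆
      hGAP d q (fun i => a i + t i) (fun i => b i + t i) := by
  rintro _ ⟨_, ⟨n, hn, rfl⟩, rfl⟩
  refine ⟨n + t, fun i => ?_, ?_⟩
  · push_cast [Pi.add_apply]
    constructor <;> linarith [hn i]
  · simp [add_mul, sum_add_distrib]

theorem hGAP_subset_nfoldSet (s : ℕ) (L U : Fin d → ℤ) :
    hGAP d q (fun i => ((s * L i : ℤ) : ℝ)) (fun i => ((s * U i : ℤ) : ℝ)) ⊆
      nfoldSet s (hGAP d q (fun i => L i) (fun i => U i)) := by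
  rintro _ ⟨n, hn, rfl⟩
  dsimp only at hn
  have hdecomp : ∀ i, n i ∈ nfoldSet s (Set.Icc (L i) (U i)) := fun i =>
    Icc_subset_nfoldSet_Icc s (L i) (U i) ⟨by exact_mod_cast (hn i).1, by exact_mod_cast (hn i).2⟩
  choose F hF hsum using hdecomp
  refine ⟨fun j => ∑ i, F i j * q i, fun j => ⟨fun i => F i j, fun i => ⟨?_, ?_⟩, rfl⟩, ?_⟩ <;> dsimp only
  · exact_mod_cast (hF i j).1
  · exact_mod_cast (hF i j).2
  · simp_rw [hsum, sum_mul]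
    exact sum_comm

end hGAP

theorem sub_le_natCast_mul_floor_sub_ceil {c a b : ℝ} {s : ℕ} (hc : 0 < c) (hs : 2 ≤ s * c)
    (hw : 4 ≤ c * (b - a)) : b - a ≤ s * ((⌊c * b⌋ : ℝ) - ⌈c * a⌉) := by
  have hfloor := Int.sub_one_lt_floor (c * b)
  have hceil := Int.ceil_lt_add_one (c * a)
  have hhalf : c * (b - a) ≤ 2 * ((⌊c * b⌋ : ℝ) - ⌈c * a⌉) := by linarith
  have hscaled : c * (b - a) ≤ c * (s * ((⌊c * b⌋ : ℝ) - ⌈c * a⌉)) := by nlinarith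
  exact le_of_mul_le_mul_left hscaled hc

theorem two_le_two_mul_ceil_one_div_mul {c : ℝ} (hc : 0 < c) : 2 ≤ ((2 * ⌈1 / c⌉₊ : ℕ) : ℝ) * c := by
  have h := (div_le_iff₀ hc).mp (Nat.le_ceil (1 / c))
  push_cast
  linarith

theorem stmt_7_general (c : ℝ) (hc : 0 < c) (d : ℕ) (q : Fin d → ℤ) (a b : Fin d → ℝ)
    (hw : ∀ i, 1 + 4 / c ≤ b i - a i + 1) :
    ∃ t : ℤ, (· + t) '' hGAP d q a b ⊆
      nfoldSet (2 * ⌈1 / c⌉₊) (hGAP d q (fun i => c * a i) (fun i => c * b i)) := by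
  set s := 2 * ⌈1 / c⌉₊
  set L : Fin d → ℤ := fun i => ⌈c * a i⌉
  set U : Fin d → ℤ := fun i => ⌊c * b i⌋
  have hwidth : ∀ i, (⌊b i⌋ - ⌈a i⌉ : ℝ) ≤ s * ((U i : ℝ) - L i) := fun i => by
    have hcw : 4 ≤ c * (b i - a i) := by
      have := (div_le_iff₀ hc).mp (show 4 / c ≤ b i - a i by linarith [hw i])
      linarith
    have := sub_le_natCast_mul_floor_sub_ceil hc (two_le_two_mul_ceil_one_div_mul hc) hcw
    linarith [Int.floor_le (b i), Int.le_ceil (a i)]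
  refine ⟨∑ i, (s * L i - ⌈a i⌉) * q i, ?_⟩
  calc _ ⊆ (· + ∑ i, (s * L i - ⌈a i⌉) * q i) '' hGAP d q (fun i => ⌈a i⌉) (fun i => ⌊b i⌋) :=
        Set.image_mono (hGAP_subset_ceil_floor q a b)
    _ ⊆ hGAP d q (fun i => ⌈a i⌉ + ((s * L i - ⌈a i⌉ : ℤ) : ℝ))
          (fun i => ⌊b i⌋ + ((s * L i - ⌈a i⌉ : ℤ) : ℝ)) :=
        image_add_hGAP_subset q _ _ _
    _ ⊆ hGAP d q (fun i => ((s * L i : ℤ) : ℝ)) (fun i => ((s * U i : ℤ) : ℝ)) :=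
        hGAP_mono q (fun i => by push_cast; linarith) (fun i => by push_cast; linarith [hwidth i])
    _ ⊆ nfoldSet s (hGAP d q (fun i => L i) (fun i => U i)) := hGAP_subset_nfoldSet q s L U
    _ ⊆ _ := nfoldSet_mono s (hGAP_mono q (fun i => Int.le_ceil _) (fun i => Int.floor_le _))

theorem stmt_7 (c : ℝ) (hc : 0 < c) (hc1 : c ≤ 1) (d : ℕ) (q : Fin d → ℤ) (a b : Fin d → ℝ)
    (hw : ∀ i, 1 + 4 / c ≤ b i - a i + 1) :
    ∃ t : ℤ, (· + t) '' hGAP d q a b ⊆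
      nfoldSet (2 * ⌈1 / c⌉₊) (hGAP d q (fun i => c * a i) (fun i => c * b i)) :=
  stmt_7_general c hc d q a b hw
end

section
/- In any set A of m distinct integer points in ℤ^d with affine dimension d, there exist d+1 points of A such that the simplex with these points as vertices has (Euclidean) volume at least m/(2^d · (d+1)!). -/
/-!
Let `p` be a simplex with vertices in `A` maximising `|D|`, where `D` is the determinant of its
edge matrix `M`, and let `N_i(x)` be the determinant of `M` with row `i` replaced by `x - p 0`.
Replacing one vertex of `p` by a point of `A` gives `|N_i(x)| ≤ |D|`; replacing two vertices and
using `D · det M[i ← u, j ← w] = N_i(u) N_j(w) - N_j(u) N_i(w)` bounds every `2 × 2` minor of `N`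
by `D²`. Points of `A` that are congruent modulo the lattice spanned by twice the rows of `M`,
of index `2^d |D|`, have `N`-coordinates congruent modulo `2D`; hence two of them agree except in
coordinates where they are `D` and `-D`, and the minor bound forbids a third one. So
`|A| ≤ 2^(d+1) |D|`, while the volume of the simplex is `|D| / d!`.
-/

open Finset Matrix

theorem Int.eq_or_eq_neg_of_two_mul_dvd_sub {x y D : ℤ} (hx : |x| ≤ |D|) (hy : |y| ≤ |D|)
    (h : 2 * D ∣ x - y) : x = y ∨ (y = -x ∧ |x| = |D|) := by
  obtain ⟨k, hk⟩ := h
  rcases eq_or_ne k 0 with rfl | hk0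
  · left
    linarith
  right
  have hsub : 2 * |D| ≤ |x - y| := by
    rw [hk, abs_mul, abs_mul, abs_two]
    nlinarith [Int.one_le_abs hk0, abs_nonneg D]
  have htri : |x - y| ≤ |x| + |y| := abs_sub _ _
  have hxD : |x| = |D| := by linarith
  refine ⟨?_, hxD⟩
  rcases abs_eq_abs.mp (show |x| = |y| by linarith) with rfl | rfl
  · simp only [sub_self, abs_zero] at hsub
    have hx0 : x = 0 := abs_eq_zero.mp (by linarith [abs_nonneg x])
    rw [hx0, neg_zero]
  · rw [neg_neg]

namespace Matrix

variable {n R : Type*} [Fintype n] [DecidableEq n]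

section CommRing

variable [CommRing R]

theorem det_updateRow_updateRow_swap (A : Matrix n n R) {i j : n} (hij : i ≠ j) (x y : n → R) :
    ((A.updateRow i x).updateRow j y).det = -((A.updateRow i y).updateRow j x).det := by
  have hperm : (A.updateRow i x).updateRow j y =
      ((A.updateRow i y).updateRow j x).submatrix (Equiv.swap i j) id := by
    ext r k
    rcases eq_or_ne r i with rfl | hri
    · simp [updateRow_apply, hij]
    rcases eq_or_ne r j with rfl | hrj
    · simp [updateRow_apply, hij]
    · simp [updateRow_apply, Equiv.swap_apply_of_ne_of_ne hri hrj, hri, hrj]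
  rw [hperm, det_permute, Equiv.Perm.sign_swap hij]
  simp

theorem det_updateRow_sum_smul (A : Matrix n n R) (i : n) (c : n → R) (v : n → n → R) :
    (A.updateRow i (∑ s, c s • v s)).det = ∑ s, c s * (A.updateRow i (v s)).det := by
  have hlin : ∀ x, (A.updateRow i x).det = detRowAlternating.toMultilinearMap.toLinearMap A i x :=
    fun x => rfl
  simp only [hlin, map_sum, map_smul, smul_eq_mul]

theorem smul_eq_sum_det_updateRow_smul_row (M : Matrix n n R) (u : n → R) :
    M.det • u = ∑ s, (M.updateRow s u).det • M s := by
  rw [← det_transpose, ← mulVec_cramer, mulVec_transpose, vecMul_eq_sum]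
  simp only [cramer_transpose_apply]

theorem det_mul_det_updateRow_updateRow (M : Matrix n n R) {i j : n} (hij : i ≠ j)
    (u w : n → R) :
    M.det * ((M.updateRow i u).updateRow j w).det =
      (M.updateRow i u).det * (M.updateRow j w).det -
        (M.updateRow j u).det * (M.updateRow i w).det := by
  set B := M.updateRow j w
  have hrow : ∀ s, s ≠ j → B s = M s := fun s hs => updateRow_ne hs
  have hterm : ∀ s, s ≠ i → s ≠ j → (B.updateRow i (M s)).det = 0 := fun s hsi hsj =>
    det_zero_of_row_eq hsi.symm (by rw [updateRow_self, updateRow_ne hsi, hrow s hsj])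
  calc M.det * ((M.updateRow i u).updateRow j w).det
      = (B.updateRow i (M.det • u)).det := by rw [updateRow_comm M hij, det_updateRow_smul]
    _ = ∑ s, (M.updateRow s u).det * (B.updateRow i (M s)).det := by
        rw [smul_eq_sum_det_updateRow_smul_row, det_updateRow_sum_smul (v := M)]
    _ = (M.updateRow i u).det * (B.updateRow i (M i)).det +
          (M.updateRow j u).det * (B.updateRow i (M j)).det :=
        Fintype.sum_eq_add i j hij fun s hs => by rw [hterm s hs.1 hs.2, mul_zero]
    _ = _ := by
        rw [← hrow i hij, updateRow_eq_self, det_updateRow_updateRow_swap _ (Ne.symm hij),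
          updateRow_eq_self]
        ring

theorem det_updateRow_injective [IsDomain R] {M : Matrix n n R} (hM : M.det ≠ 0) :
    Function.Injective fun u i => (M.updateRow i u).det := by
  intro u w huw
  apply smul_right_injective (n → R) hM
  have h : ∀ s, (M.updateRow s u).det = (M.updateRow s w).det := fun s => congrFun huw s
  simp only [smul_eq_sum_det_updateRow_smul_row M, h]

end CommRing

theorem card_quotient_span_rows (T : Matrix n n ℤ) (hT : T.det ≠ 0) :
    Nat.card ((n → ℤ) ⧸ Submodule.span ℤ (Set.range T)) = T.det.natAbs := by
  have hli := linearIndependent_rows_of_det_ne_zero hT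
  rw [← Submodule.natAbs_det_basis_change (Pi.basisFun ℤ n) _ (Module.Basis.span hli),
    Pi.basisFun_det_apply]
  congr
  ext i
  simp [Module.Basis.span_apply]

theorem two_mul_det_dvd_sub_of_sub_mem_span (M : Matrix n n ℤ) {u w : n → ℤ}
    (h : u - w ∈ Submodule.span ℤ (Set.range ((2 : ℤ) • M))) (i : n) :
    2 * M.det ∣ (M.updateRow i u).det - (M.updateRow i w).det := by
  obtain ⟨c, hc⟩ := (Submodule.mem_span_range_iff_exists_fun ℤ).mp h
  refine ⟨c i, ?_⟩
  have hrow : ∀ s, ((2 : ℤ) • M) s = (2 : ℤ) • M s := fun s => rfl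
  rw [← cramer_transpose_apply, ← cramer_transpose_apply, ← Pi.sub_apply, ← map_sub, ← hc]
  simp only [hrow, map_sum, map_smul, cramer_transpose_row_self, Finset.sum_apply, Pi.smul_apply,
    Pi.single_apply]
  simp [mul_comm]

structure IsExchangeMaximal (M : Matrix n n ℤ) (S : Set (n → ℤ)) : Prop where
  abs_det_updateRow_le : ∀ u ∈ S, ∀ i, |(M.updateRow i u).det| ≤ |M.det|
  abs_det_updateRow_updateRow_le : ∀ u ∈ S, ∀ w ∈ S, ∀ i j, i ≠ j →
    |((M.updateRow i u).updateRow j w).det| ≤ |M.det|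

namespace IsExchangeMaximal

variable {M : Matrix n n ℤ} {S : Set (n → ℤ)} {u w : n → ℤ}

theorem det_updateRow_eq_or_eq_neg (hM : M.IsExchangeMaximal S) (hu : u ∈ S) (hw : w ∈ S)
    (huw : u - w ∈ Submodule.span ℤ (Set.range ((2 : ℤ) • M))) (i : n) :
    (M.updateRow i u).det = (M.updateRow i w).det ∨
      ((M.updateRow i w).det = -(M.updateRow i u).det ∧ |(M.updateRow i u).det| = |M.det|) :=
  Int.eq_or_eq_neg_of_two_mul_dvd_sub (hM.abs_det_updateRow_le u hu i)
    (hM.abs_det_updateRow_le w hw i) (two_mul_det_dvd_sub_of_sub_mem_span M huw i)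

theorem abs_det_updateRow_lt_of_eq (hM : M.IsExchangeMaximal S) (hdet : M.det ≠ 0)
    (hu : u ∈ S) (hw : w ∈ S) (hne : u ≠ w)
    (huw : u - w ∈ Submodule.span ℤ (Set.range ((2 : ℤ) • M))) {i : n}
    (heq : (M.updateRow i u).det = (M.updateRow i w).det) :
    |(M.updateRow i u).det| < |M.det| := by
  obtain ⟨j, hj⟩ : ∃ j, (M.updateRow j u).det ≠ (M.updateRow j w).det := by
    by_contra! h
    exact hne (det_updateRow_injective hdet (funext h))
  obtain ⟨hwj, huj⟩ := (hM.det_updateRow_eq_or_eq_neg hu hw huw j).resolve_left hj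
  have hij : i ≠ j := by
    rintro rfl
    exact hj heq
  have hid := det_mul_det_updateRow_updateRow M hij u w
  rw [hwj, ← heq] at hid
  have hle := hM.abs_det_updateRow_updateRow_le u hu w hw i j hij
  have hpos : 0 < |M.det| := abs_pos.mpr hdet
  have hprod : |M.det| * (2 * |(M.updateRow i u).det|) ≤ |M.det| * |M.det| := by
    calc |M.det| * (2 * |(M.updateRow i u).det|)
        = |M.det * ((M.updateRow i u).updateRow j w).det| := by
          rw [hid, show ∀ a b : ℤ, a * -b - b * a = -(2 * (a * b)) from fun a b => by ring,
            abs_neg, abs_mul, abs_mul, abs_two, huj]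
          ring
      _ ≤ |M.det| * |M.det| := by rw [abs_mul]; gcongr
  nlinarith [abs_nonneg (M.updateRow i u).det]

open Classical in
theorem card_filter_mk_le_two {S : Finset (n → ℤ)} (hM : M.IsExchangeMaximal S)
    (hdet : M.det ≠ 0) (q : (n → ℤ) ⧸ Submodule.span ℤ (Set.range ((2 : ℤ) • M))) :
    #{u ∈ S | Submodule.Quotient.mk u = q} ≤ 2 := by
  have hcong : ∀ {x y : n → ℤ}, Submodule.Quotient.mk x = q → Submodule.Quotient.mk y = q →
      x - y ∈ Submodule.span ℤ (Set.range ((2 : ℤ) • M)) :=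
    fun hx hy => (Submodule.Quotient.eq _).mp (hx.trans hy.symm)
  by_contra! h
  obtain ⟨a, ha, b, hb, c, hc, hab, hac, hbc⟩ := Finset.two_lt_card.mp h
  simp only [mem_filter] at ha hb hc
  obtain ⟨i, hi⟩ : ∃ i, (M.updateRow i a).det ≠ (M.updateRow i b).det := by
    by_contra! h
    exact hab (det_updateRow_injective hdet (funext h))
  obtain ⟨hbi, hai⟩ :=
    (hM.det_updateRow_eq_or_eq_neg ha.1 hb.1 (hcong ha.2 hb.2) i).resolve_left hi
  rcases hM.det_updateRow_eq_or_eq_neg ha.1 hc.1 (hcong ha.2 hc.2) i with hci | ⟨hci, -⟩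
  · exact (hM.abs_det_updateRow_lt_of_eq hdet ha.1 hc.1 hac (hcong ha.2 hc.2) hci).ne hai
  · refine (hM.abs_det_updateRow_lt_of_eq hdet hb.1 hc.1 hbc (hcong hb.2 hc.2)
      (hbi.trans hci.symm)).ne ?_
    rw [hbi, abs_neg, hai]

theorem card_le {S : Finset (n → ℤ)} (hM : M.IsExchangeMaximal S) (hdet : M.det ≠ 0) :
    #S ≤ 2 ^ (Fintype.card n + 1) * M.det.natAbs := by
  classical
  set Q := (n → ℤ) ⧸ Submodule.span ℤ (Set.range ((2 : ℤ) • M))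
  have hcard : Nat.card Q = 2 ^ Fintype.card n * M.det.natAbs := by
    rw [card_quotient_span_rows _ (by rw [det_smul]; simp [hdet]), det_smul, Int.natAbs_mul,
      Int.natAbs_pow]
    rfl
  have : Finite Q := Nat.finite_of_card_ne_zero (by rw [hcard]; positivity)
  have := Fintype.ofFinite Q
  calc #S ≤ 2 * #(S.image Submodule.Quotient.mk) :=
        Finset.card_le_mul_card_image S 2 fun q _ => hM.card_filter_mk_le_two hdet q
    _ ≤ 2 * Nat.card Q := by
        rw [Nat.card_eq_fintype_card]
        gcongr
        exact Finset.card_le_univ _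
    _ = 2 ^ (Fintype.card n + 1) * M.det.natAbs := by rw [hcard, pow_succ]; ring

end IsExchangeMaximal

end Matrix

theorem exists_affineIndependent_fin_of_affineSpan_eq_top {k V P : Type*} [DivisionRing k]
    [AddCommGroup V] [Module k V] [AddTorsor V P] [FiniteDimensional k V] {n : ℕ}
    (hn : Module.finrank k V = n) {s : Set P} (hs : affineSpan k s = ⊤) :
    ∃ p : Fin (n + 1) → P, AffineIndependent k p ∧ ∀ i, p i ∈ s := by
  obtain ⟨t, hts, hspan, hind⟩ := exists_affineIndependent k V s
  have : Finite t := finite_of_fin_dim_affineIndependent k hind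
  have := Fintype.ofFinite t
  rw [hs, ← Subtype.range_coe (s := t), hind.affineSpan_eq_top_iff_card_eq_finrank_add_one,
    hn] at hspan
  let e := (Fintype.equivFinOfCardEq hspan).symm
  exact ⟨(↑) ∘ e, hind.comp_embedding e.toEmbedding, fun i => hts (e i).2⟩

def edgeMatrix {n : ℕ} {m R : Type*} [Sub R] (p : Fin (n + 1) → m → R) : Matrix (Fin n) m R :=
  Matrix.of fun i => p i.succ - p 0

section edgeMatrix

variable {n : ℕ} {m R : Type*}

theorem edgeMatrix_update_succ [DecidableEq m] [Sub R] (p : Fin (n + 1) → m → R) (i : Fin n)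
    (a : m → R) :
    edgeMatrix (Function.update p i.succ a) = (edgeMatrix p).updateRow i (a - p 0) := by
  ext r j
  rcases eq_or_ne r i with rfl | hr
  · simp [edgeMatrix, (Fin.succ_ne_zero r).symm]
  · simp [edgeMatrix, hr, (Fin.succ_ne_zero i).symm]

theorem edgeMatrix_map_intCast [Ring R] (p : Fin (n + 1) → m → ℤ) :
    (edgeMatrix p).map (Int.cast : ℤ → R) = edgeMatrix fun k j => (p k j : R) := by
  ext i j
  simp [edgeMatrix]

theorem affineIndependent_iff_det_edgeMatrix_ne_zero {K : Type*} [Field K]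
    (p : Fin (n + 1) → Fin n → K) :
    AffineIndependent K p ↔ (edgeMatrix p).det ≠ 0 := by
  rw [affineIndependent_iff_linearIndependent_vsub K p 0,
    ← linearIndependent_equiv (finSuccAboveEquiv 0), ← isUnit_iff_ne_zero,
    ← Matrix.isUnit_iff_isUnit_det, ← Matrix.linearIndependent_rows_iff_isUnit]
  rfl

theorem det_edgeMatrix_ne_zero_iff_affineIndependent_cast (p : Fin (n + 1) → Fin n → ℤ) :
    (edgeMatrix p).det ≠ 0 ↔ AffineIndependent ℝ fun k j => (p k j : ℝ) := by
  rw [affineIndependent_iff_det_edgeMatrix_ne_zero, ← edgeMatrix_map_intCast, ← Int.cast_det,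
    Int.cast_ne_zero]

end edgeMatrix

section LatticeSimplex

variable {d : ℕ}

theorem exists_det_edgeMatrix_ne_zero {A : Set (Fin d → ℤ)}
    (hA : affineSpan ℝ ((fun a : Fin d → ℤ => fun j => (a j : ℝ)) '' A) = ⊤) :
    ∃ q : Fin (d + 1) → Fin d → ℤ, (∀ i, q i ∈ A) ∧ (edgeMatrix q).det ≠ 0 := by
  obtain ⟨r, hr, hrA⟩ :=
    exists_affineIndependent_fin_of_affineSpan_eq_top (Module.finrank_fin_fun ℝ) hA
  choose q hqA hq using hrA
  have hrq : r = fun k j => (q k j : ℝ) := funext fun k => (hq k).symm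
  exact ⟨q, hqA, (det_edgeMatrix_ne_zero_iff_affineIndependent_cast q).mpr (hrq ▸ hr)⟩

theorem exists_forall_abs_det_edgeMatrix_le {A : Finset (Fin d → ℤ)}
    {q : Fin (d + 1) → Fin d → ℤ} (hqA : ∀ i, q i ∈ A) :
    ∃ p : Fin (d + 1) → Fin d → ℤ, (∀ i, p i ∈ A) ∧
      ∀ q, (∀ i, q i ∈ A) → |(edgeMatrix q).det| ≤ |(edgeMatrix p).det| := by
  obtain ⟨p, hpA, hmax⟩ := Finset.exists_max_image (Fintype.piFinset fun _ => A)
    (fun p => |(edgeMatrix p).det|) ⟨q, Fintype.mem_piFinset.mpr hqA⟩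
  exact ⟨p, Fintype.mem_piFinset.mp hpA, fun q hq => hmax q (Fintype.mem_piFinset.mpr hq)⟩

theorem isExchangeMaximal_edgeMatrix {A : Set (Fin d → ℤ)} {p : Fin (d + 1) → Fin d → ℤ}
    (hpA : ∀ i, p i ∈ A)
    (hmax : ∀ q, (∀ i, q i ∈ A) → |(edgeMatrix q).det| ≤ |(edgeMatrix p).det|) :
    (edgeMatrix p).IsExchangeMaximal ((· - p 0) '' A) := by
  have hupd : ∀ {q : Fin (d + 1) → Fin d → ℤ} (k a), (∀ i, q i ∈ A) → a ∈ A →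
      ∀ i, Function.update q k a i ∈ A := by
    intro q k a hq ha i
    rcases eq_or_ne i k with rfl | hik
    · simpa using ha
    · simpa [hik] using hq i
  constructor
  · rintro _ ⟨a, ha, rfl⟩ i
    rw [← edgeMatrix_update_succ]
    exact hmax _ (hupd _ _ hpA ha)
  · rintro _ ⟨a, ha, rfl⟩ _ ⟨b, hb, rfl⟩ i j hij
    have h0 : Function.update p i.succ a 0 = p 0 :=
      Function.update_of_ne (Fin.succ_ne_zero i).symm _ _
    rw [← edgeMatrix_update_succ, ← h0, ← edgeMatrix_update_succ]
    exact hmax _ (hupd _ _ (hupd _ _ hpA ha) hb)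

theorem card_le_two_pow_mul_natAbs_det {A : Finset (Fin d → ℤ)} {p : Fin (d + 1) → Fin d → ℤ}
    (hpA : ∀ i, p i ∈ A)
    (hmax : ∀ q, (∀ i, q i ∈ A) → |(edgeMatrix q).det| ≤ |(edgeMatrix p).det|)
    (hdet : (edgeMatrix p).det ≠ 0) :
    #A ≤ 2 ^ (d + 1) * (edgeMatrix p).det.natAbs := by
  classical
  have hM : (edgeMatrix p).IsExchangeMaximal ↑(A.image (· - p 0)) := by
    rw [Finset.coe_image]
    exact isExchangeMaximal_edgeMatrix hpA hmax
  simpa [Finset.card_image_of_injective A sub_left_injective] using hM.card_le hdet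

end LatticeSimplex

theorem stmt_10 (d : ℕ) (A : Finset (Fin d → ℤ))
    (hdim : affineSpan ℝ ((fun a : Fin d → ℤ => fun j => (a j : ℝ)) '' ↑A) = ⊤) :
    ∃ p : Fin (d + 1) → (Fin d → ℤ), (∀ i, p i ∈ A) ∧ Function.Injective p ∧
      (A.card : ℝ) / (2 ^ d * (Nat.factorial (d + 1))) ≤
        |Matrix.det (Matrix.of fun i j : Fin d => ((p i.succ j - p 0 j : ℤ) : ℝ))| /
          (Nat.factorial d) := by
  obtain ⟨q, hqA, hq⟩ := exists_det_edgeMatrix_ne_zero hdim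
  obtain ⟨p, hpA, hmax⟩ := exists_forall_abs_det_edgeMatrix_le hqA
  have hdet : (edgeMatrix p).det ≠ 0 := abs_pos.mp ((abs_pos.mpr hq).trans_le (hmax q hqA))
  have hcard : #A ≤ 2 ^ d * (d + 1) * (edgeMatrix p).det.natAbs := by
    rcases Nat.eq_zero_or_pos d with rfl | hd
    · simpa using (Finset.card_le_one_of_subsingleton A).trans (Int.natAbs_pos.mpr hdet)
    · calc #A ≤ 2 ^ (d + 1) * (edgeMatrix p).det.natAbs :=
            card_le_two_pow_mul_natAbs_det hpA hmax hdet
        _ ≤ 2 ^ d * (d + 1) * (edgeMatrix p).det.natAbs := by rw [pow_succ]; gcongr; omega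
  have hinj := ((det_edgeMatrix_ne_zero_iff_affineIndependent_cast p).mp hdet).injective
  refine ⟨p, hpA, Function.Injective.of_comp (f := fun a j => (a j : ℝ)) hinj, ?_⟩
  have hvol : |(Matrix.of fun i j : Fin d => ((p i.succ j - p 0 j : ℤ) : ℝ)).det| =
      ((edgeMatrix p).det.natAbs : ℝ) := by
    rw [Nat.cast_natAbs, Int.cast_abs, Int.cast_det]
    rfl
  rw [hvol, div_le_div_iff₀ (by positivity) (by positivity), Nat.factorial_succ]
  have hcard' : (#A : ℝ) ≤ 2 ^ d * (d + 1) * (edgeMatrix p).det.natAbs := by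
    exact_mod_cast hcard
  push_cast
  nlinarith [Nat.factorial_pos d]
end

section
/- Let A be a subset of a box Q in ℤ^d with widths w_1, ..., w_d and 0 ∈ A. Then for every point z in the zonotope Z_A (the Minkowski sum of segments [0,1]·a over a ∈ A), there exists a subset sum s(z) ∈ Σ(A) = {Σ_{s∈S} s : S ⊆ A} such that |z_i − s(z)_i| ≤ √(d·|A|)·w_i for every coordinate i ≤ d. -/
/-!
Write `z = ∑ t a • a` with `t ∈ [0,1]^A` and pick a random subset of `A`, containing each `a`
independently with probability `t a`. Its sum has mean `z`, and in coordinate `i` its variance is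
`∑ t a (1 - t a) (a i)² ≤ |A| w_i² / 4`. Normalising coordinate `i` by `w_i²` and summing over the
`d` coordinates, the expected total squared error is at most `d |A| / 4`, so some subset attains
at most this much; in particular every single coordinate deviates by at most `√(d |A|) w_i / 2`.
-/

open Finset

variable {α : Type*} [DecidableEq α]

/-- The probability that the random subset of `A` which contains each `a` independently with
probability `t a` equals `S`. -/
def bernoulliWeight (A : Finset α) (t : α → ℝ) (S : Finset α) : ℝ :=
  ∏ a ∈ A, if a ∈ S then t a else 1 - t a

lemma bernoulliWeight_nonneg {A : Finset α} {t : α → ℝ} (ht : ∀ a ∈ A, t a ∈ Set.Icc 0 1)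
    (S : Finset α) : 0 ≤ bernoulliWeight A t S :=
  prod_nonneg fun a ha => by
    obtain ⟨h0, h1⟩ := ht a ha
    split_ifs <;> linarith

lemma sum_powerset_insert_bernoulliWeight_mul {A : Finset α} {a : α} (ha : a ∉ A) (t : α → ℝ)
    (F : Finset α → ℝ) :
    ∑ S ∈ (insert a A).powerset, bernoulliWeight (insert a A) t S * F S =
      ∑ S ∈ A.powerset, bernoulliWeight A t S * ((1 - t a) * F S + t a * F (insert a S)) := by
  have hmem : ∀ S, ∀ b ∈ A, (b ∈ insert a S ↔ b ∈ S) := fun S b hb =>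
    ⟨fun h => (mem_insert.1 h).resolve_left (ne_of_mem_of_not_mem hb ha), mem_insert_of_mem⟩
  rw [sum_powerset_insert ha, ← sum_add_distrib]
  refine sum_congr rfl fun S hS => ?_
  have haS : a ∉ S := fun h => ha (mem_powerset.1 hS h)
  simp only [bernoulliWeight, prod_insert ha, if_neg haS, mem_insert_self, if_true,
    prod_congr rfl fun b hb => if_congr (hmem S b hb) rfl rfl]
  ring

lemma sum_bernoulliWeight (A : Finset α) (t : α → ℝ) :
    ∑ S ∈ A.powerset, bernoulliWeight A t S = 1 := by
  induction A using Finset.induction_on with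
  | empty => simp [bernoulliWeight]
  | insert a A ha ih =>
    simpa [ih] using sum_powerset_insert_bernoulliWeight_mul ha t (fun _ => 1)

lemma sum_bernoulliWeight_mul_sq_sub (A : Finset α) (t x : α → ℝ) :
    ∑ S ∈ A.powerset, bernoulliWeight A t S * (∑ a ∈ A, t a * x a - ∑ a ∈ S, x a) ^ 2 =
      ∑ a ∈ A, t a * (1 - t a) * x a ^ 2 := by
  induction A using Finset.induction_on with
  | empty => simp
  | insert a A ha ih =>
    have hmass : t a * (1 - t a) * x a ^ 2 =
        ∑ S ∈ A.powerset, bernoulliWeight A t S * (t a * (1 - t a) * x a ^ 2) := by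
      rw [← sum_mul, sum_bernoulliWeight, one_mul]
    rw [sum_powerset_insert_bernoulliWeight_mul ha, sum_insert ha, sum_insert ha, ← ih, hmass,
      ← sum_add_distrib]
    refine sum_congr rfl fun S hS => ?_
    rw [sum_insert fun h => ha (mem_powerset.1 hS h)]
    -- the cross terms cancel because `(1 - t a) * t a + t a * (t a - 1) = 0`
    ring

lemma sum_bernoulliWeight_mul_sq_sub_le (A : Finset α) (t : α → ℝ) {x : α → ℝ} {M : ℝ}
    (hx : ∀ a ∈ A, |x a| ≤ M) :
    ∑ S ∈ A.powerset, bernoulliWeight A t S * (∑ a ∈ A, t a * x a - ∑ a ∈ S, x a) ^ 2 ≤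
      #A * M ^ 2 / 4 := by
  rw [sum_bernoulliWeight_mul_sq_sub]
  calc ∑ a ∈ A, t a * (1 - t a) * x a ^ 2 ≤ ∑ _a ∈ A, 1 / 4 * M ^ 2 := by
        refine sum_le_sum fun a ha => mul_le_mul ?_ ?_ (sq_nonneg _) (by norm_num)
        · nlinarith [sq_nonneg (t a - 1 / 2)]
        · exact sq_le_sq.2 ((hx a ha).trans (le_abs_self M))
    _ = #A * M ^ 2 / 4 := by rw [sum_const, nsmul_eq_mul]; ring

lemma exists_le_sum_bernoulliWeight_mul {A : Finset α} {t : α → ℝ}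
    (ht : ∀ a ∈ A, t a ∈ Set.Icc 0 1) (F : Finset α → ℝ) :
    ∃ S ⊆ A, F S ≤ ∑ S ∈ A.powerset, bernoulliWeight A t S * F S := by
  have hmass := sum_bernoulliWeight A t
  obtain ⟨S, hS, hmin⟩ := A.powerset.exists_mem_eq_inf' (powerset_nonempty A) F
  refine ⟨S, mem_powerset.1 hS, ?_⟩
  have hinf := inf_le_centerMass (f := F) (fun S _ => bernoulliWeight_nonneg ht S) (hmass ▸ one_pos)
  simpa [hmin, centerMass, hmass] using hinf

theorem exists_subset_abs_sum_sub_le {ι : Type*} [Fintype ι] {A : Finset α} {t : α → ℝ}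
    (ht : ∀ a ∈ A, t a ∈ Set.Icc 0 1) (x : α → ι → ℝ) {W : ι → ℝ} (hW : ∀ i, 0 < W i)
    (hx : ∀ a ∈ A, ∀ i, |x a i| ≤ W i) :
    ∃ S ⊆ A, ∀ i, |∑ a ∈ A, t a * x a i - ∑ a ∈ S, x a i| ≤
      √(Fintype.card ι * #A) * W i / 2 := by
  set err : Finset α → ι → ℝ := fun S i => ∑ a ∈ A, t a * x a i - ∑ a ∈ S, x a i
  have hmean : ∑ S ∈ A.powerset, bernoulliWeight A t S * ∑ i, (err S i / W i) ^ 2 ≤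
      Fintype.card ι * #A / 4 := by
    calc ∑ S ∈ A.powerset, bernoulliWeight A t S * ∑ i, (err S i / W i) ^ 2
        = ∑ i, (∑ S ∈ A.powerset, bernoulliWeight A t S * err S i ^ 2) / W i ^ 2 := by
          simp only [mul_sum, sum_div, div_pow, mul_div_assoc]
          exact sum_comm
      _ ≤ ∑ i, (#A * W i ^ 2 / 4) / W i ^ 2 := by
          gcongr with i
          exact sum_bernoulliWeight_mul_sq_sub_le A t fun a ha => hx a ha i
      _ = Fintype.card ι * #A / 4 := by
          have hcancel : ∀ i, #A * W i ^ 2 / 4 / W i ^ 2 = (#A : ℝ) / 4 := fun i => by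
            field_simp [(hW i).ne']
          simp only [hcancel, sum_const, card_univ, nsmul_eq_mul]
          ring
  obtain ⟨S, hS, hSle⟩ := exists_le_sum_bernoulliWeight_mul ht fun S => ∑ i, (err S i / W i) ^ 2
  refine ⟨S, hS, fun i => ?_⟩
  have hi : (err S i / W i) ^ 2 ≤ Fintype.card ι * #A / 4 :=
    (single_le_sum (fun j _ => sq_nonneg (err S j / W j)) (mem_univ i)).trans (hSle.trans hmean)
  have habs := Real.abs_le_sqrt hi
  rw [abs_div, abs_of_pos (hW i), div_le_iff₀ (hW i), Real.sqrt_div' _ zero_le_four,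
    show (4 : ℝ) = 2 ^ 2 by norm_num, Real.sqrt_sq zero_le_two] at habs
  linarith

theorem stmt_12 (d : ℕ) (lo hi : Fin d → ℤ) (A : Finset (Fin d → ℤ))
    (hbox : ∀ a ∈ A, ∀ i, lo i ≤ a i ∧ a i ≤ hi i)
    (h0 : (0 : Fin d → ℤ) ∈ A)
    (z : Fin d → ℝ)
    (hz : ∃ t : (Fin d → ℤ) → ℝ, (∀ a, 0 ≤ t a ∧ t a ≤ 1) ∧
      ∀ i, z i = ∑ a ∈ A, t a * (a i : ℝ)) :
    ∃ B ⊆ A, ∀ i, |z i - ((∑ a ∈ B, a i : ℤ) : ℝ)| ≤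
      Real.sqrt (d * A.card) * ((hi i - lo i + 1 : ℤ) : ℝ) := by
  obtain ⟨t, ht, hzt⟩ := hz
  have hzero : ∀ i, lo i ≤ 0 ∧ 0 ≤ hi i := by simpa using hbox 0 h0
  have hwidth : ∀ i, (0 : ℝ) < ((hi i - lo i + 1 : ℤ) : ℝ) := fun i => by
    have := hzero i
    exact_mod_cast (by omega : 0 < hi i - lo i + 1)
  have hcoord : ∀ a ∈ A, ∀ i, |(a i : ℝ)| ≤ ((hi i - lo i + 1 : ℤ) : ℝ) := fun a ha i => by
    have := hzero i
    have := hbox a ha i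
    exact_mod_cast (abs_le.2 ⟨by omega, by omega⟩ : |a i| ≤ hi i - lo i + 1)
  obtain ⟨B, hB, hBle⟩ := exists_subset_abs_sum_sub_le (fun a _ => ht a) (fun a i => (a i : ℝ))
    hwidth hcoord
  refine ⟨B, hB, fun i => ?_⟩
  rw [hzt i, Int.cast_sum]
  simpa using (hBle i).trans (half_le_self (mul_nonneg (Real.sqrt_nonneg _) (hwidth i).le))
end

section
/- If P is a homogeneous one-dimensional arithmetic progression of length L > n contained in Σ(A) for a set A of positive integers, a is the common difference of P, and B is a set of positive integers bounded above by n with Σ_{b∈B} b > (first element of P) + a·n, then Σ(B) intersects P in a non-zero element. -/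
/-!
Take a subset `S ⊆ B` whose sum is a multiple of `a` and is maximal among those not exceeding `x`
(the empty set qualifies, since `x ≥ 0`). The rest `B \ S` has sum greater than `a n` with all
elements at most `n`, so it has at least `a` elements, and by the pigeonhole principle on prefix
sums modulo `a` it contains a non-empty `U` of at most `a` elements whose sum is divisible by `a`.
Then `S ∪ U` has sum divisible by `a`, greater than `x` by maximality, and at most `x + a n`: it is
one of the terms `x + j a`, `1 ≤ j ≤ n`, of the progression.
-/

/-- The set of subset sums of a finite set of integers. -/
def subsetSums (A : Finset ℤ) : Finset ℤ := A.powerset.image fun B => ∑ x ∈ B, x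

open Finset

namespace Finset

variable {ι : Type*}

theorem exists_lt_dvd_sum_sdiff_of_monotone [DecidableEq ι] {T : ℕ → Finset ι}
    (hT : Monotone T) (f : ι → ℤ) {m : ℕ} (hm : 0 < m) :
    ∃ i j, i < j ∧ j ≤ m ∧ (m : ℤ) ∣ ∑ x ∈ T j \ T i, f x := by
  have : NeZero m := ⟨hm.ne'⟩
  obtain ⟨i, hi, j, hj, hij, hsum⟩ :=
    exists_ne_map_eq_of_card_lt_of_maps_to (s := range (m + 1)) (t := (univ : Finset (ZMod m)))
      (f := fun k => ((∑ x ∈ T k, f x : ℤ) : ZMod m)) (by simp [ZMod.card]) (by simp)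
  rw [mem_range] at hi hj
  rw [ZMod.intCast_eq_intCast_iff_dvd_sub] at hsum
  rcases hij.lt_or_gt with hlt | hlt
  · exact ⟨i, j, hlt, by omega, by rwa [sum_sdiff_eq_sub (hT hlt.le)]⟩
  · refine ⟨j, i, hlt, by omega, ?_⟩
    rw [sum_sdiff_eq_sub (hT hlt.le), ← neg_sub]
    exact hsum.neg_right

theorem exists_subset_card_le_dvd_sum (s : Finset ι) (f : ι → ℤ) {m : ℕ} (hm : 0 < m)
    (hs : m ≤ #s) : ∃ t ⊆ s, t.Nonempty ∧ #t ≤ m ∧ (m : ℤ) ∣ ∑ x ∈ t, f x := by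
  classical
  obtain ⟨u, hus, rfl⟩ := exists_subset_card_eq hs
  let e : Fin #u ↪ ι := u.equivFin.symm.toEmbedding.trans (.subtype (· ∈ u))
  let T : ℕ → Finset ι := fun k => (univ.filter fun i : Fin #u => (i : ℕ) < k).map e
  have hT : Monotone T := fun k l hkl =>
    map_subset_map.2 (monotone_filter_right _ fun _ _ hi => hi.trans_le hkl)
  have hTu : ∀ k, T k ⊆ u := by
    intro k x hx
    obtain ⟨i, -, rfl⟩ := mem_map.1 hx
    exact (u.equivFin.symm i).2
  obtain ⟨i, j, hij, hj, hdvd⟩ := exists_lt_dvd_sum_sdiff_of_monotone hT f hm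
  refine ⟨T j \ T i, (sdiff_subset.trans (hTu j)).trans hus, ⟨e ⟨i, by omega⟩, ?_⟩,
    card_le_card (sdiff_subset.trans (hTu j)), hdvd⟩
  simp [T, mem_sdiff, mem_map', hij]

theorem lt_card_of_mul_lt_sum {s : Finset ι} {f : ι → ℤ} {m n : ℕ} (hf : ∀ i ∈ s, f i ≤ n)
    (h : m * n < ∑ i ∈ s, f i) : m < #s := by
  have hle := s.sum_le_card_nsmul f n hf
  rw [nsmul_eq_mul] at hle
  exact_mod_cast lt_of_mul_lt_mul_right (h.trans_le hle) (Nat.cast_nonneg n)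

theorem exists_subset_dvd_sum_mem_Ioc {B : Finset ι} {f : ι → ℤ} {a n : ℕ} {x : ℤ} (ha : 0 < a)
    (hx : 0 ≤ x) (hpos : ∀ i ∈ B, 0 < f i) (hle : ∀ i ∈ B, f i ≤ n)
    (hsum : x + a * n < ∑ i ∈ B, f i) :
    ∃ T ⊆ B, (a : ℤ) ∣ ∑ i ∈ T, f i ∧ ∑ i ∈ T, f i ∈ Set.Ioc x (x + a * n) := by
  classical
  let 𝒮 := B.powerset.filter fun S => (a : ℤ) ∣ ∑ i ∈ S, f i ∧ ∑ i ∈ S, f i ≤ x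
  obtain ⟨S, hS𝒮, hSmax⟩ := 𝒮.exists_max_image (fun S => ∑ i ∈ S, f i) ⟨∅, by simp [𝒮, hx]⟩
  obtain ⟨hSB, hSdvd, hSx⟩ : S ⊆ B ∧ (a : ℤ) ∣ ∑ i ∈ S, f i ∧ ∑ i ∈ S, f i ≤ x := by
    simpa [𝒮] using hS𝒮
  have hrest : a * n < ∑ i ∈ B \ S, f i := by rw [sum_sdiff_eq_sub hSB]; linarith
  have hcard : a ≤ #(B \ S) :=
    (lt_card_of_mul_lt_sum (fun i hi => hle i (mem_sdiff.1 hi).1) hrest).le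
  obtain ⟨U, hUS, hUne, hUcard, hUdvd⟩ := exists_subset_card_le_dvd_sum (B \ S) f ha hcard
  have hUB : U ⊆ B := hUS.trans sdiff_subset
  have hUpos : 0 < ∑ i ∈ U, f i := sum_pos (fun i hi => hpos i (hUB hi)) hUne
  have hUle : ∑ i ∈ U, f i ≤ a * n :=
    calc ∑ i ∈ U, f i ≤ #U * n := by
          simpa using U.sum_le_card_nsmul f n fun i hi => hle i (hUB hi)
      _ ≤ a * n := by gcongr
  have hsumSU : ∑ i ∈ S ∪ U, f i = ∑ i ∈ S, f i + ∑ i ∈ U, f i :=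
    sum_union (disjoint_right.2 fun i hi => (mem_sdiff.1 (hUS hi)).2)
  have hdvd : (a : ℤ) ∣ ∑ i ∈ S ∪ U, f i := hsumSU ▸ dvd_add hSdvd hUdvd
  have hgt : x < ∑ i ∈ S ∪ U, f i := by
    by_contra! hSUx
    have := hSmax (S ∪ U) (by simpa [𝒮] using ⟨union_subset hSB hUB, hdvd, hSUx⟩)
    linarith
  exact ⟨S ∪ U, union_subset hSB hUB, hdvd, hgt, by linarith⟩

end Finset

theorem subsetSums_nonneg {A : Finset ℤ} (hA : ∀ z ∈ A, 0 ≤ z) {y : ℤ} (hy : y ∈ subsetSums A) :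
    0 ≤ y := by
  obtain ⟨S, hSA, rfl⟩ := mem_image.1 hy
  exact sum_nonneg fun z hz => hA z (mem_powerset.1 hSA hz)

theorem stmt_14 (n L : ℕ) (a x : ℤ) (ha : 0 < a) (hax : a ∣ x)
    (A B : Finset ℤ) (hApos : ∀ z ∈ A, 0 < z) (hBpos : ∀ z ∈ B, 0 < z)
    (hBle : ∀ z ∈ B, z ≤ (n : ℤ)) (hL : n < L)
    (hP : ∀ j : ℕ, j < L → x + j * a ∈ subsetSums A)
    (hsum : x + a * n < ∑ z ∈ B, z) :
    ∃ y, y ≠ 0 ∧ y ∈ subsetSums B ∧ ∃ j : ℕ, j < L ∧ y = x + j * a := by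
  have hx : 0 ≤ x := by
    simpa using subsetSums_nonneg (fun z hz => (hApos z hz).le) (hP 0 (by omega))
  lift a to ℕ using ha.le
  obtain ⟨T, hTB, hTdvd, hxT, hTx⟩ :=
    exists_subset_dvd_sum_mem_Ioc (f := fun z => z) (Nat.cast_pos.1 ha) hx hBpos hBle hsum
  obtain ⟨d, hd⟩ := dvd_sub hTdvd hax
  have hd0 : 0 < d := pos_of_mul_pos_right (by linarith) ha.le
  have hdn : d ≤ n := le_of_mul_le_mul_left (by linarith) ha
  lift d to ℕ using hd0.le
  exact ⟨_, by linarith, mem_image.2 ⟨T, mem_powerset.2 hTB, rfl⟩, d, by omega, by linarith⟩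
end
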